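/- arXiv:2212.06418 — 2 statements merged into one kernel-verified Lean document; each statement's English description precedes it below -/
import Mathlib

section
/- Let X be a monotone determined space that has one-step closure. Then int(↑x) = ⇑_d x for each x ∈ X. -/
/-!
`int(↑x) ⊆ ⇑_d x` holds in any space: an open neighbourhood of `y` inside `↑x` is met by every
directed set converging to `y`. Conversely, if `x ≪_d y` and `y` were in the closure of
`X ∖ ↑x`, one-step closure would give a directed `D ⊆ ↓(X ∖ ↑x)` converging to `y`; some
`d ∈ D` lies above `x`, so the point of `X ∖ ↑x` above `d` would lie in `↑x`.
-/

open Set Topology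

universe u v

variable {X : Type u}

/-- The specialization order: `x ≤ y` iff `x` lies in the closure of `{y}`. -/
def sle [TopologicalSpace X] (x y : X) : Prop := x ∈ closure ({y} : Set X)

/-- `↑A` with respect to the specialization order. -/
def upSet [TopologicalSpace X] (A : Set X) : Set X := {x | ∃ a ∈ A, sle a x}

/-- `↓A` with respect to the specialization order. -/
def downSet [TopologicalSpace X] (A : Set X) : Set X := {x | ∃ a ∈ A, sle x a}

/-- A subset is directed: nonempty and any two elements have an upper bound in it. -/
def DirSet [TopologicalSpace X] (D : Set X) : Prop :=
  D.Nonempty ∧ ∀ a ∈ D, ∀ b ∈ D, ∃ c ∈ D, sle a c ∧ sle b c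

/-- `D →_τ x`: every open set containing `x` meets `D`. -/
def DConv [TopologicalSpace X] (D : Set X) (x : X) : Prop :=
  ∀ U : Set X, IsOpen U → x ∈ U → (D ∩ U).Nonempty

/-- Monotone determined open set. -/
def MDOpen [TopologicalSpace X] (U : Set X) : Prop :=
  ∀ D : Set X, DirSet D → ∀ x ∈ U, DConv D x → (D ∩ U).Nonempty

/-- Monotone determined space: every monotone determined open set is open. -/
def MonDet (X : Type u) [TopologicalSpace X] : Prop :=
  ∀ U : Set X, MDOpen U → IsOpen U

/-- `x ≪_d y`. -/
def dwb [TopologicalSpace X] (x y : X) : Prop :=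
  ∀ D : Set X, DirSet D → DConv D y → ∃ d ∈ D, sle x d

/-- `⇓_d x = {y | y ≪_d x}`. -/
def dDown [TopologicalSpace X] (x : X) : Set X := {y | dwb y x}

/-- `⇑_d x = {y | x ≪_d y}`. -/
def dUp [TopologicalSpace X] (x : X) : Set X := {y | dwb x y}

/-- c-space. -/
def CSpace (X : Type u) [TopologicalSpace X] : Prop :=
  ∀ U : Set X, IsOpen U → ∀ y ∈ U, ∃ x : X, y ∈ interior (upSet {x}) ∧ upSet {x} ⊆ U

/-- Locally hypercompact space. -/
def LocallyHypercompact (X : Type u) [TopologicalSpace X] : Prop :=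
  ∀ U : Set X, IsOpen U → ∀ x ∈ U, ∃ F : Set X, F.Finite ∧ F.Nonempty ∧
    x ∈ interior (upSet F) ∧ upSet F ⊆ U

/-- `A^{↓≪} = {x ∈ A : ⇓_d x ∩ A ≠ ∅}`. -/
def lowApprox [TopologicalSpace X] (A : Set X) : Set X :=
  {x | x ∈ A ∧ (dDown x ∩ A).Nonempty}

/-- `A^{↑≪} = {x : ⇓_d x ⊆ ↓A}`. -/
def upApprox [TopologicalSpace X] (A : Set X) : Set X :=
  {x | dDown x ⊆ downSet A}

/-- `Ã = {x : ∃ directed D ⊆ ↓A ∩ ↓x with D →_τ x}`. -/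
def tilde [TopologicalSpace X] (A : Set X) : Set X :=
  {x | ∃ D : Set X, DirSet D ∧ D ⊆ downSet A ∩ downSet {x} ∧ DConv D x}

/-- `Â = {x : ∃ directed D ⊆ ↓A with D →_τ x}`. -/
def hatSet [TopologicalSpace X] (A : Set X) : Set X :=
  {x | ∃ D : Set X, DirSet D ∧ D ⊆ downSet A ∧ DConv D x}

/-- One-step closure. -/
def OneStepClosure (X : Type u) [TopologicalSpace X] : Prop :=
  ∀ A : Set X, tilde A = closure A

/-- Weak one-step closure. -/
def WeakOneStepClosure (X : Type u) [TopologicalSpace X] : Prop :=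
  ∀ A : Set X, hatSet A = closure A

/-- d-meet continuous space. -/
def DMeetCont (X : Type u) [TopologicalSpace X] : Prop :=
  MonDet X ∧ ∀ (D : Set X) (x : X), DirSet D → DConv D x →
    x ∈ closure (downSet D ∩ downSet {x})

/-- An ideal on `J`: closed under subsets and finite unions. -/
def IsIdeal {J : Type v} (I : Set (Set J)) : Prop :=
  (∀ A ∈ I, ∀ B : Set J, B ⊆ A → B ∈ I) ∧ ∀ A ∈ I, ∀ B ∈ I, A ∪ B ∈ I

/-- IS-convergence of a net with respect to an ideal. -/
def ISConv [TopologicalSpace X] {J : Type v} (xj : J → X) (I : Set (Set J)) (x : X) : Prop :=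
  ∃ D : Set X, DirSet D ∧ DConv D x ∧ ∀ d ∈ D, {j | ¬ sle d (xj j)} ∈ I

/-- I-convergence of a net with respect to an (explicit) topology. -/
def IConvT {J : Type v} (t : TopologicalSpace X) (xj : J → X) (I : Set (Set J)) (x : X) : Prop :=
  ∀ U : Set X, t.IsOpen U → x ∈ U → {j | xj j ∉ U} ∈ I

/-- ISL-convergence. -/
def ISLConv [TopologicalSpace X] {J : Type v} (xj : J → X) (I : Set (Set J)) (x : X) : Prop :=
  ISConv xj I x ∧ ∀ y : X, {j | ¬ sle y (xj j)} ∈ I → sle y x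

/-- A directed family of nonempty finite subsets (Smyth preorder). -/
def DirFam [TopologicalSpace X] (F : Set (Set X)) : Prop :=
  (∀ G ∈ F, G.Finite ∧ G.Nonempty) ∧
  ∀ G1 ∈ F, ∀ G2 ∈ F, ∃ G ∈ F, G ⊆ upSet G1 ∩ upSet G2

/-- `ℱ →_τ x`: every open set containing `x` contains a member of `ℱ`. -/
def FConv [TopologicalSpace X] (F : Set (Set X)) (x : X) : Prop :=
  ∀ U : Set X, IsOpen U → x ∈ U → ∃ G ∈ F, G ⊆ U

/-- IGS-convergence. -/
def IGSConv [TopologicalSpace X] {J : Type v} (xj : J → X) (I : Set (Set J)) (x : X) : Prop :=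
  ∃ F : Set (Set X), DirFam F ∧ FConv F x ∧ ∀ G ∈ F, {j | xj j ∉ upSet G} ∈ I

/-- IGSL-convergence. -/
def IGSLConv [TopologicalSpace X] {J : Type v} (xj : J → X) (I : Set (Set J)) (x : X) : Prop :=
  IGSConv xj I x ∧
    ∀ G : Set X, G.Finite → G.Nonempty → {j | xj j ∉ upSet G} ∈ I → x ∈ upSet G

/-- The Lawson topology: generated by the open sets of `τ` and complements of `↑y`. -/
def lawson (X : Type u) [TopologicalSpace X] : TopologicalSpace X :=
  TopologicalSpace.generateFrom {V | IsOpen V ∨ ∃ y : X, V = (upSet {y})ᶜ}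

/-- The family `IS(X)`. -/
def memIS (X : Type u) [TopologicalSpace X] (U : Set X) : Prop :=
  ∀ (J : Type u) [Preorder J], Nonempty J → (∀ a b : J, ∃ c, a ≤ c ∧ b ≤ c) →
    ∀ (xj : J → X) (I : Set (Set J)), IsIdeal I →
      ∀ x ∈ U, ISConv xj I x → {j | xj j ∉ U} ∈ I

/-- The family `IGS(X)`. -/
def memIGS (X : Type u) [TopologicalSpace X] (U : Set X) : Prop :=
  ∀ (J : Type u) [Preorder J], Nonempty J → (∀ a b : J, ∃ c, a ≤ c ∧ b ≤ c) →
    ∀ (xj : J → X) (I : Set (Set J)), IsIdeal I →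
      ∀ x ∈ U, IGSConv xj I x → {j | xj j ∉ U} ∈ I

section

variable [TopologicalSpace X]

lemma sle_trans {x y z : X} (hxy : sle x y) (hyz : sle y z) : sle x z :=
  closure_minimal (singleton_subset_iff.mpr hyz) isClosed_closure hxy

lemma interior_upSet_singleton_subset_dUp (x : X) : interior (upSet {x}) ⊆ dUp x := by
  intro y hy D _ hDy
  obtain ⟨d, hdD, hd⟩ := hDy _ isOpen_interior hy
  obtain ⟨a, rfl, hxd⟩ := interior_subset hd
  exact ⟨d, hdD, hxd⟩

lemma disjoint_dUp_tilde_compl_upSet (x : X) : Disjoint (dUp x) (tilde (upSet {x})ᶜ) := by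
  refine disjoint_left.mpr fun y hxy ⟨D, hD, hDsub, hDy⟩ ↦ ?_
  obtain ⟨d, hdD, hxd⟩ := hxy D hD hDy
  obtain ⟨a, ha, hda⟩ := (hDsub hdD).1
  exact ha ⟨x, rfl, sle_trans hxd hda⟩

lemma dUp_subset_interior_upSet_singleton (h : OneStepClosure X) (x : X) :
    dUp x ⊆ interior (upSet {x}) := by
  rw [← compl_compl (interior _), ← closure_compl, ← h, subset_compl_iff_disjoint_right]
  exact disjoint_dUp_tilde_compl_upSet x

end

theorem stmt_5_general [TopologicalSpace X]
    (h : OneStepClosure X) (x : X) :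
    interior (upSet {x}) = dUp x :=
  (interior_upSet_singleton_subset_dUp x).antisymm (dUp_subset_interior_upSet_singleton h x)

/-- In a monotone determined space with one-step closure,
`int (↑x) = ⇑_d x` for each `x`. -/
theorem stmt_5 [TopologicalSpace X] [T0Space X] (hX : MonDet X)
    (h : OneStepClosure X) (x : X) :
    interior (upSet {x}) = dUp x :=
  stmt_5_general h x
end

section
/- Let X be a monotone determined space. Then X is a c-space if and only if for every net (x_j)_{j∈J} in X, every ideal I on J, and every x ∈ X: (x_j) IS-converges to x with respect to I if and only if (x_j) I-converges to x with respect to τ. -/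
open Set Topology

universe u v

variable {X : Type u}

lemma sle_refl' [TopologicalSpace X] (x : X) : sle x x :=
  subset_closure rfl

lemma mem_upSet_singleton [TopologicalSpace X] {d z : X} :
    z ∈ upSet ({d} : Set X) ↔ sle d z := by
  constructor
  · rintro ⟨a, rfl, h⟩; exact h
  · intro h; exact ⟨d, rfl, h⟩

lemma open_upper [TopologicalSpace X] {U : Set X} (hU : IsOpen U) {a z : X}
    (ha : a ∈ U) (h : sle a z) : z ∈ U := by
  rcases mem_closure_iff.mp h U hU ha with ⟨w, hwU, hwz⟩
  rcases hwz with rfl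
  exact hwU

/-- A monotone determined space is a c-space iff IS-convergence
coincides with I-convergence with respect to `τ` for all nets and ideals. -/
theorem stmt_14 [tX : TopologicalSpace X] [T0Space X] (hX : MonDet X) :
    CSpace X ↔
      ∀ (J : Type u) [Preorder J], Nonempty J → (∀ a b : J, ∃ c, a ≤ c ∧ b ≤ c) →
        ∀ (xj : J → X) (I : Set (Set J)), IsIdeal I → ∀ x : X,
          (ISConv xj I x ↔ IConvT tX xj I x) := by
  constructor
  · -- c-space implies the equivalence
    intro hC J _ _ _ xj I hI x
    constructor
    · rintro ⟨D, hdir, hconv, hd⟩ U hU hxU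
      rcases hconv U hU hxU with ⟨d, hdD, hdU⟩
      exact hI.1 _ (hd d hdD) _ (fun j hj hsle => hj (open_upper hU hdU hsle))
    · intro hIconv
      refine ⟨{d : X | x ∈ interior (upSet ({d} : Set X))}, ⟨?_, ?_⟩, ?_, ?_⟩
      · rcases hC univ isOpen_univ x (mem_univ x) with ⟨d, hd1, _⟩
        exact ⟨d, hd1⟩
      · intro a ha b hb
        rcases hC (interior (upSet ({a} : Set X)) ∩ interior (upSet ({b} : Set X)))
          (isOpen_interior.inter isOpen_interior) x ⟨ha, hb⟩ with ⟨c, hc1, hc2⟩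
        have hcc : c ∈ upSet ({c} : Set X) := mem_upSet_singleton.mpr (sle_refl' c)
        have hcm := hc2 hcc
        exact ⟨c, hc1, mem_upSet_singleton.mp (interior_subset hcm.1),
          mem_upSet_singleton.mp (interior_subset hcm.2)⟩
      · intro U hU hxU
        rcases hC U hU x hxU with ⟨d, hd1, hd2⟩
        exact ⟨d, hd1, hd2 (mem_upSet_singleton.mpr (sle_refl' d))⟩
      · intro d hd
        refine hI.1 _ (hIconv (interior (upSet ({d} : Set X))) isOpen_interior hd) _ ?_
        intro j hj hmem
        exact hj (mem_upSet_singleton.mp (interior_subset hmem))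
  · -- the equivalence implies c-space
    intro H U hU y hyU
    set J : Type u := {p : X × Set X // p.1 ∈ p.2 ∧ IsOpen p.2 ∧ y ∈ p.2} with hJ
    letI : Preorder J :=
      { le := fun p q => q.val.2 ⊆ p.val.2
        le_refl := fun p => subset_rfl
        le_trans := fun a b c h1 h2 => Set.Subset.trans h2 h1 }
    have hne : Nonempty J := ⟨⟨(y, univ), mem_univ y, isOpen_univ, mem_univ y⟩⟩
    have hdirJ : ∀ a b : J, ∃ c : J, a ≤ c ∧ b ≤ c := by
      intro a b
      refine ⟨⟨(y, a.val.2 ∩ b.val.2), ⟨a.2.2.2, b.2.2.2⟩,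
        a.2.2.1.inter b.2.2.1, a.2.2.2, b.2.2.2⟩, ?_, ?_⟩
      · exact inter_subset_left
      · exact inter_subset_right
    set I : Set (Set J) := {A | ∃ j : J, ∀ k : J, j ≤ k → k ∉ A} with hIdef
    have hIideal : IsIdeal I := by
      constructor
      · rintro A ⟨j, hj⟩ B hBA
        exact ⟨j, fun k hk hkB => hj k hk (hBA hkB)⟩
      · rintro A ⟨j1, hj1⟩ B ⟨j2, hj2⟩
        rcases hdirJ j1 j2 with ⟨j, h1, h2⟩
        refine ⟨j, fun k hk hkm => ?_⟩
        rcases hkm with h | h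
        · exact hj1 k (le_trans h1 hk) h
        · exact hj2 k (le_trans h2 hk) h
    set xj : J → X := fun j => j.val.1 with hxj
    have hIconv : IConvT tX xj I y := by
      intro W hW hyW
      refine ⟨⟨(y, W), hyW, hW, hyW⟩, fun k hk hkm => ?_⟩
      exact hkm (hk k.2.1)
    rcases (H J hne hdirJ xj I hIideal y).mpr hIconv with ⟨D, hdir, hconv, hd⟩
    rcases hconv U hU hyU with ⟨d, hdD, hdU⟩
    rcases hd d hdD with ⟨j0, hj0⟩
    set V := j0.val.2 with hV
    have hVopen : IsOpen V := j0.2.2.1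
    have hyV : y ∈ V := j0.2.2.2
    have hVsub : V ⊆ upSet ({d} : Set X) := by
      intro b hb
      have hk := hj0 ⟨(b, V), hb, hVopen, hyV⟩ (subset_rfl : V ⊆ V)
      simp only [mem_setOf_eq, not_not] at hk
      exact mem_upSet_singleton.mpr hk
    refine ⟨d, mem_interior.mpr ⟨V, hVsub, hVopen, hyV⟩, ?_⟩
    intro z hz
    exact open_upper hU hdU (mem_upSet_singleton.mp hz)
end
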